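/- Let H be a complex Hilbert space, T a bounded linear operator on H that is hyponormal and invertible (with bounded inverse T⁻¹), and s ∈ ℂ with |s| < 1. Then for every f ∈ H, ‖(sT + T*) f‖ ≥ ((1 − |s|)/‖T⁻¹‖) · ‖f‖; in particular sT + T* is bounded below. -/

import Mathlib

/-!
If `T` is hyponormal then, for every `u`, the inner product `⟪u, (s • T + T†) (T u)⟫` equals
`‖T u‖² + s ⟪T† u, T u⟫`, and `|⟪T† u, T u⟫| ≤ ‖T† u‖ ‖T u‖ ≤ ‖T u‖²`; hence by Cauchy–Schwarz
`(1 - |s|) ‖T u‖² ≤ ‖u‖ ‖(s • T + T†) (T u)‖`. Substituting `u = T⁻¹ f` and `‖T⁻¹ f‖ ≤ ‖T⁻¹‖ ‖f‖`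
gives the lower bound.
-/

open ContinuousLinearMap
open scoped InnerProductSpace

section

variable {𝕜 H : Type*} [RCLike 𝕜] [NormedAddCommGroup H] [InnerProductSpace 𝕜 H] [CompleteSpace H]

def IsHyponormal (T : H →L[𝕜] H) : Prop :=
  ∀ h : H, ‖adjoint T h‖ ≤ ‖T h‖

namespace IsHyponormal

theorem one_sub_norm_mul_sq_le {T : H →L[𝕜] H} (hT : IsHyponormal T) (s : 𝕜) (u : H) :
    (1 - ‖s‖) * ‖T u‖ ^ 2 ≤ ‖u‖ * ‖(s • T + adjoint T) (T u)‖ := by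
  have hinner : ⟪u, (s • T + adjoint T) (T u)⟫_𝕜 = (‖T u‖ : 𝕜) ^ 2 + s * ⟪adjoint T u, T u⟫_𝕜 := by
    rw [add_apply, smul_apply, inner_add_right, inner_smul_right, adjoint_inner_right,
      ← adjoint_inner_left, inner_self_eq_norm_sq_to_K, add_comm]
  calc (1 - ‖s‖) * ‖T u‖ ^ 2 ≤ ‖T u‖ ^ 2 - ‖s‖ * (‖adjoint T u‖ * ‖T u‖) := by
        have := mul_le_mul_of_nonneg_right (hT u) (norm_nonneg (T u))
        nlinarith [norm_nonneg s]
    _ ≤ ‖(‖T u‖ : 𝕜) ^ 2‖ - ‖s * ⟪adjoint T u, T u⟫_𝕜‖ := by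
        rw [norm_mul, norm_pow, RCLike.norm_ofReal, abs_norm]
        gcongr
        exact norm_inner_le_norm _ _
    _ ≤ ‖⟪u, (s • T + adjoint T) (T u)⟫_𝕜‖ := hinner ▸ norm_sub_le_norm_add _ _
    _ ≤ ‖u‖ * ‖(s • T + adjoint T) (T u)‖ := norm_inner_le_norm _ _

theorem one_sub_norm_mul_norm_le {T R : H →L[𝕜] H} (hT : IsHyponormal T) (hR : T * R = 1)
    (s : 𝕜) (f : H) : (1 - ‖s‖) * ‖f‖ ≤ ‖R‖ * ‖(s • T + adjoint T) f‖ := by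
  rcases (norm_nonneg f).eq_or_lt with hf | hf
  · rw [← hf, mul_zero]; positivity
  have hTR : T (R f) = f := by simpa using congr($hR f)
  refine le_of_mul_le_mul_right ?_ hf
  calc (1 - ‖s‖) * ‖f‖ * ‖f‖ = (1 - ‖s‖) * ‖T (R f)‖ ^ 2 := by rw [hTR]; ring
    _ ≤ ‖R f‖ * ‖(s • T + adjoint T) (T (R f))‖ := hT.one_sub_norm_mul_sq_le s (R f)
    _ ≤ ‖R‖ * ‖f‖ * ‖(s • T + adjoint T) f‖ := by rw [hTR]; gcongr; exact R.le_opNorm f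
    _ = ‖R‖ * ‖(s • T + adjoint T) f‖ * ‖f‖ := by ring

end IsHyponormal

end

theorem norm_smul_add_adjoint_apply_ge_of_invertible_general
    {H : Type*} [NormedAddCommGroup H] [InnerProductSpace ℂ H] [CompleteSpace H]
    (T Tinv : H →L[ℂ] H) (hT : ∀ h : H, ‖adjoint T h‖ ≤ ‖T h‖)
    (h1 : T * Tinv = 1)
    (s : ℂ) (hs : ‖s‖ < 1) :
    (∀ f : H, ((1 - ‖s‖) / ‖Tinv‖) * ‖f‖ ≤ ‖(s • T + adjoint T) f‖) ∧
      (∃ c > 0, ∀ h : H, c * ‖h‖ ≤ ‖(s • T + adjoint T) h‖) := by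
  have hbound := IsHyponormal.one_sub_norm_mul_norm_le hT h1 s
  -- `‖Tinv‖` itself vanishes when `H` is trivial, so it cannot serve as the denominator of `c`.
  refine ⟨fun f => ?_, ⟨(1 - ‖s‖) / (‖Tinv‖ + 1), by positivity, fun f => ?_⟩⟩
  · rw [div_mul_eq_mul_div]
    exact div_le_of_le_mul₀ (norm_nonneg _) (norm_nonneg _) (by linarith [hbound f])
  · rw [div_mul_eq_mul_div]
    refine div_le_of_le_mul₀ (by positivity) (norm_nonneg _) ?_
    nlinarith [hbound f, norm_nonneg ((s • T + adjoint T) f)]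

/-- Let `T` be hyponormal and invertible on a complex Hilbert space, with
bounded inverse `Tinv`, and let `s ∈ ℂ` with `|s| < 1`. Then
`‖(sT + T*)f‖ ≥ ((1 − |s|)/‖T⁻¹‖) · ‖f‖` for all `f`; in particular `sT + T*`
is bounded below. -/
theorem norm_smul_add_adjoint_apply_ge_of_invertible
    {H : Type*} [NormedAddCommGroup H] [InnerProductSpace ℂ H] [CompleteSpace H]
    (T Tinv : H →L[ℂ] H) (hT : ∀ h : H, ‖adjoint T h‖ ≤ ‖T h‖)
    (h1 : T * Tinv = 1) (h2 : Tinv * T = 1)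
    (s : ℂ) (hs : ‖s‖ < 1) :
    (∀ f : H, ((1 - ‖s‖) / ‖Tinv‖) * ‖f‖ ≤ ‖(s • T + adjoint T) f‖) ∧
      (∃ c > 0, ∀ h : H, c * ‖h‖ ≤ ‖(s • T + adjoint T) h‖) :=
  norm_smul_add_adjoint_apply_ge_of_invertible_general T Tinv hT h1 s hs
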